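/- arXiv:2010.12236 — 8 statements merged into one kernel-verified Lean document; each statement's English description precedes it below -/
import Mathlib

section
/- Let m : [0,1] → [0,1], M ∈ ℝ, L > 0, K ≥ 1, and suppose m satisfies the weak Lipschitz condition: for all x, y ∈ [0,1], |m(x) - m(y)| ≤ max(|M - m(x)|, L·|x - y|). Let a, a' ∈ [0,1] with |a - a'| ≤ 1/K, and suppose m(a) = M + α·L/K for some α > 0. Then m(a') ≤ M + (α + max(α,1))·L/K. -/
theorem stmt_0 (m : ℝ → ℝ) (M L K α : ℝ)
    (hm : ∀ x ∈ Set.Icc (0:ℝ) 1, m x ∈ Set.Icc (0:ℝ) 1)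
    (hL : 0 < L) (hK : 1 ≤ K)
    (hlip : ∀ x ∈ Set.Icc (0:ℝ) 1, ∀ y ∈ Set.Icc (0:ℝ) 1,
      |m x - m y| ≤ max (|M - m x|) (L * |x - y|))
    (a a' : ℝ) (ha : a ∈ Set.Icc (0:ℝ) 1) (ha' : a' ∈ Set.Icc (0:ℝ) 1)
    (hdist : |a - a'| ≤ 1 / K)
    (hα : 0 < α) (hma : m a = M + α * L / K) :
    m a' ≤ M + (α + max α 1) * L / K := by
  have hK0 : (0:ℝ) < K := lt_of_lt_of_le one_pos hK
  have h1 := hlip a ha a' ha'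
  have hM : |M - m a| = α * L / K := by
    rw [hma]
    have hpos : (0:ℝ) < α * L / K := by positivity
    rw [show M - (M + α * L / K) = -(α * L / K) by ring, abs_neg, abs_of_pos hpos]
  have hmax : max (|M - m a|) (L * |a - a'|) ≤ max α 1 * L / K := by
    rw [hM]
    apply max_le
    · gcongr
      exact le_max_left α 1
    · have h2 : L * |a - a'| ≤ L * (1 / K) := by gcongr
      have h3 : L / K ≤ max α 1 * (L / K) :=
        le_mul_of_one_le_left (le_of_lt (div_pos hL hK0)) (le_max_right α 1)
      have : max α 1 * (L / K) = max α 1 * L / K := by ring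
      have h2' : L * (1 / K) = L / K := by ring
      linarith
  have h4 := (abs_le.mp (h1.trans hmax)).1
  have h5 : (α + max α 1) * L / K = α * L / K + max α 1 * L / K := by ring
  rw [h5]
  linarith [hma ▸ h4]
end

section
/- Let m : [0,1] → [0,1] satisfy the weak Lipschitz condition |m(x) - m(y)| ≤ max(|M - m(x)|, L·|x - y|) for all x, y ∈ [0,1], with L > 0 and K ≥ 1. Let a, a' ∈ [0,1] with |a - a'| ≤ 1/K, and suppose m(a) = M + α·L/K for some α > 0. Then m(a') ≥ M + (α - max(α,2)/2)·L/K. -/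
theorem stmt_1 (m : ℝ → ℝ) (M L K α : ℝ)
    (hm : ∀ x ∈ Set.Icc (0:ℝ) 1, m x ∈ Set.Icc (0:ℝ) 1)
    (hL : 0 < L) (hK : 1 ≤ K)
    (hlip : ∀ x ∈ Set.Icc (0:ℝ) 1, ∀ y ∈ Set.Icc (0:ℝ) 1,
      |m x - m y| ≤ max (|M - m x|) (L * |x - y|))
    (a a' : ℝ) (ha : a ∈ Set.Icc (0:ℝ) 1) (ha' : a' ∈ Set.Icc (0:ℝ) 1)
    (hdist : |a - a'| ≤ 1 / K)
    (hα : 0 < α) (hma : m a = M + α * L / K) :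
    m a' ≥ M + (α - max α 2 / 2) * L / K := by
  have hK0 : (0 : ℝ) < K := lt_of_lt_of_le one_pos hK
  have key := hlip a' ha' a ha
  have habs : m a - m a' ≤ |m a' - m a| := by
    rw [abs_sub_comm]; exact le_abs_self _
  have hmax2 : (2 : ℝ) ≤ max α 2 := le_max_right _ _
  have hmaxα : α ≤ max α 2 := le_max_left _ _
  have hLK : 0 < L / K := div_pos hL hK0
  have haa : |a' - a| ≤ 1 / K := by rwa [abs_sub_comm]
  rcases le_or_gt (|M - m a'|) (L * |a' - a|) with h | h
  · have key' : m a - m a' ≤ L * (1 / K) := by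
      calc m a - m a' ≤ |m a' - m a| := habs
        _ ≤ L * |a' - a| := key.trans (le_of_eq (max_eq_right h))
        _ ≤ L * (1 / K) := by nlinarith
    have hLK1 : L * (1 / K) = L / K := by ring
    rw [hLK1] at key'
    have hc : α * L / K = α * (L / K) := by ring
    rw [hc] at hma
    have hfact : 0 ≤ (max α 2 - 2) * (L / K) :=
      mul_nonneg (by linarith) hLK.le
    have htgt : (α - max α 2 / 2) * L / K = (α - max α 2 / 2) * (L / K) := by ring
    rw [ge_iff_le, htgt]
    nlinarith
  · have key' : m a - m a' ≤ |M - m a'| :=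
      habs.trans (key.trans (le_of_eq (max_eq_left h.le)))
    have hc : α * L / K = α * (L / K) := by ring
    rw [hc] at hma
    rcases le_or_gt M (m a') with h2 | h2
    · have : |M - m a'| = m a' - M := by rw [abs_sub_comm]; exact abs_of_nonneg (by linarith)
      rw [this] at key'
      -- m a' ≥ (m a + M)/2 = M + α/2 * (L/K)
      have hfact : 0 ≤ (max α 2 - α) * (L / K) :=
        mul_nonneg (by linarith) hLK.le
      have htgt : (α - max α 2 / 2) * L / K = (α - max α 2 / 2) * (L / K) := by ring
      rw [ge_iff_le, htgt]
      nlinarith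
    · exfalso
      have : |M - m a'| = M - m a' := abs_of_nonneg (by linarith)
      rw [this] at key'
      nlinarith
end

section
/- Let m : [0,1] → [0,1] satisfy the weak Lipschitz condition |m(x) - m(y)| ≤ max(|M - m(x)|, L·|x - y|) and the margin condition: for all ε ∈ (0,1), the Lebesgue measure of {x ∈ [0,1] : |M - m(x)| ≤ ε} is at most Q·ε, where L, Q > 0. If there exists x₀ ∈ [0,1] with m(x₀) = M, then Q·L ≥ 1. -/
/-! At a point `x₀` with `m x₀ = M` the weak Lipschitz condition reads `|M - m y| ≤ L |x₀ - y|`,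
so the `ε`-margin set contains every point of `[0,1]` within `ε / L` of `x₀`. For `ε ≤ L` these
points have measure at least `ε / L`, and the margin condition then forces `ε / L ≤ Q ε`. -/

open MeasureTheory Set

lemma ofReal_le_volume_Icc_inter_Icc {a b x r : ℝ} (hx : x ∈ Icc a b) (hr : r ≤ b - a) :
    ENNReal.ofReal r ≤ volume (Icc a b ∩ Icc (x - r) (x + r)) := by
  obtain ⟨hax, hxb⟩ := hx
  -- an interval of length `r` inside the intersection, pushed to the left of `b` if needed
  obtain ⟨c, hsub⟩ : ∃ c, Icc c (c + r) ⊆ Icc a b ∩ Icc (x - r) (x + r) := by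
    by_cases hright : x + r ≤ b
    · exact ⟨x, fun y ⟨h₁, h₂⟩ => ⟨⟨by linarith, by linarith⟩, by linarith, by linarith⟩⟩
    · exact ⟨b - r, fun y ⟨h₁, h₂⟩ => ⟨⟨by linarith, by linarith⟩, by linarith, by linarith⟩⟩
  calc ENNReal.ofReal r = volume (Icc c (c + r)) := by rw [Real.volume_Icc, add_sub_cancel_left]
    _ ≤ _ := measure_mono hsub

lemma inter_Icc_subset_sublevel_of_abs_sub_le_mul {m : ℝ → ℝ} {s : Set ℝ} {x₀ L ε : ℝ}
    (hL : 0 < L) (hlip : ∀ y ∈ s, |m x₀ - m y| ≤ L * |x₀ - y|) :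
    s ∩ Icc (x₀ - ε / L) (x₀ + ε / L) ⊆ {y ∈ s | |m x₀ - m y| ≤ ε} := by
  rintro y ⟨hy, hyr⟩
  have hdist : |x₀ - y| ≤ ε / L := by
    rw [abs_sub_comm, abs_sub_le_iff]
    constructor <;> linarith [hyr.1, hyr.2]
  refine ⟨hy, ?_⟩
  calc |m x₀ - m y| ≤ L * |x₀ - y| := hlip y hy
    _ ≤ L * (ε / L) := by gcongr
    _ = ε := mul_div_cancel₀ ε hL.ne'

theorem stmt_2_general (m : ℝ → ℝ) (M L Q : ℝ)
    (hL : 0 < L)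
    (hlip : ∀ x ∈ Set.Icc (0:ℝ) 1, ∀ y ∈ Set.Icc (0:ℝ) 1,
      |m x - m y| ≤ max (|M - m x|) (L * |x - y|))
    (hmargin : ∀ ε ∈ Set.Ioo (0:ℝ) 1,
      volume {x ∈ Set.Icc (0:ℝ) 1 | |M - m x| ≤ ε} ≤ ENNReal.ofReal (Q * ε))
    (hx₀ : ∃ x₀ ∈ Set.Icc (0:ℝ) 1, m x₀ = M) :
    Q * L ≥ 1 := by
  obtain ⟨x₀, hx₀, rfl⟩ := hx₀
  have hlip₀ : ∀ y ∈ Icc (0:ℝ) 1, |m x₀ - m y| ≤ L * |x₀ - y| := fun y hy => by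
    simpa only [sub_self, abs_zero, max_eq_right (by positivity : 0 ≤ L * |x₀ - y|)]
      using hlip x₀ hx₀ y hy
  obtain ⟨ε, hε₀, hε₁, hεL⟩ : ∃ ε : ℝ, 0 < ε ∧ ε < 1 ∧ ε ≤ L :=
    ⟨min L 1 / 2, by positivity, by linarith [min_le_right L 1], by linarith [min_le_left L 1]⟩
  have hradius : ε / L ≤ 1 - 0 := by rw [sub_zero, div_le_one hL]; exact hεL
  have hvol : ENNReal.ofReal (ε / L) ≤ ENNReal.ofReal (Q * ε) :=
    (ofReal_le_volume_Icc_inter_Icc hx₀ hradius).trans <|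
      (measure_mono (inter_Icc_subset_sublevel_of_abs_sub_le_mul hL hlip₀)).trans
        (hmargin ε ⟨hε₀, hε₁⟩)
  have hr : ε / L ≤ Q * ε :=
    ((ENNReal.ofReal_le_ofReal_iff').1 hvol).resolve_right (div_pos hε₀ hL).not_ge
  rw [div_le_iff₀ hL] at hr
  nlinarith

theorem stmt_2 (m : ℝ → ℝ) (M L Q : ℝ)
    (hm : ∀ x ∈ Set.Icc (0:ℝ) 1, m x ∈ Set.Icc (0:ℝ) 1)
    (hM : M ∈ Set.Icc (0:ℝ) 1)
    (hL : 0 < L) (hQ : 0 < Q)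
    (hlip : ∀ x ∈ Set.Icc (0:ℝ) 1, ∀ y ∈ Set.Icc (0:ℝ) 1,
      |m x - m y| ≤ max (|M - m x|) (L * |x - y|))
    (hmargin : ∀ ε ∈ Set.Ioo (0:ℝ) 1,
      volume {x ∈ Set.Icc (0:ℝ) 1 | |M - m x| ≤ ε} ≤ ENNReal.ofReal (Q * ε))
    (hx₀ : ∃ x₀ ∈ Set.Icc (0:ℝ) 1, m x₀ = M) :
    Q * L ≥ 1 :=
  stmt_2_general m M L Q hL hlip hmargin hx₀
end

section
/- Let m : [0,1] → [0,1] be continuous, let p ∈ (0,1), L > 0, and let M = min{A : λ({x : m(x) ≥ A}) < p}, where λ is Lebesgue measure. Assume m satisfies the weak Lipschitz condition |m(x)-m(y)| ≤ max(|M-m(x)|, L|x-y|), that λ({x : m(x) < M}) > 0, and that {x : m(x) = M} is nonempty. Then for every K ≥ 1 with 1/K ≤ 1, λ({x ∈ [0,1] : M ≤ m(x) < M + L/K}) ≥ min(p, 1/K). -/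
open MeasureTheory

private lemma aux_closed (m : ℝ → ℝ) (hcont : ContinuousOn m (Set.Icc 0 1)) (A : ℝ) :
    IsClosed {x ∈ Set.Icc (0:ℝ) 1 | A ≤ m x} := by
  have : {x ∈ Set.Icc (0:ℝ) 1 | A ≤ m x} = Set.Icc (0:ℝ) 1 ∩ m ⁻¹' (Set.Ici A) := rfl
  rw [this]
  exact hcont.preimage_isClosed_of_isClosed isClosed_Icc isClosed_Ici

/-- Case z < y : an interval of length 1/K lies in the target slab. -/
private lemma aux_left (m : ℝ → ℝ) (L M K : ℝ)
    (hcont : ContinuousOn m (Set.Icc 0 1)) (hL : 0 < L) (hK0 : 0 < K)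
    (hlip : ∀ w ∈ Set.Icc (0:ℝ) 1, m w = M → ∀ u ∈ Set.Icc (0:ℝ) 1,
      |M - m u| ≤ L * |w - u|)
    (z y : ℝ) (hz : z ∈ Set.Icc (0:ℝ) 1) (hy : y ∈ Set.Icc (0:ℝ) 1)
    (hzy : z < y) (hmz : m z < M) (hmy : M + L / K ≤ m y) :
    ENNReal.ofReal (1/K) ≤ volume {x ∈ Set.Icc (0:ℝ) 1 | M ≤ m x ∧ m x < M + L / K} := by
  have hLK : 0 < L / K := div_pos hL hK0
  have hIcc_sub : Set.Icc z y ⊆ Set.Icc 0 1 := Set.Icc_subset_Icc hz.1 hy.2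
  have hcont' : ContinuousOn m (Set.Icc z y) := hcont.mono hIcc_sub
  have hMmem : M ∈ Set.Icc (m z) (m y) := ⟨hmz.le, by linarith⟩
  obtain ⟨w0, hw0, hmw0⟩ := intermediate_value_Icc hzy.le hcont' hMmem
  set T : Set ℝ := {t ∈ Set.Icc z y | m t = M} with hT
  have hTne : T.Nonempty := ⟨w0, hw0, hmw0⟩
  have hTbdd : BddAbove T := ⟨y, fun t ht => ht.1.2⟩
  have hTclosed : IsClosed T := by
    have : T = Set.Icc z y ∩ m ⁻¹' {M} := rfl
    rw [this]
    exact hcont'.preimage_isClosed_of_isClosed isClosed_Icc isClosed_singleton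
  set w := sSup T with hw
  have hwT : w ∈ T := hTclosed.csSup_mem hTne hTbdd
  have hw_zy : w ∈ Set.Icc z y := hwT.1
  have hmw : m w = M := hwT.2
  have hge : ∀ u ∈ Set.Icc w y, M ≤ m u := by
    intro u hu
    by_contra h
    push_neg at h
    have huy : Set.Icc u y ⊆ Set.Icc z y := Set.Icc_subset_Icc (hw_zy.1.trans hu.1) le_rfl
    obtain ⟨t, ht, hmt⟩ := intermediate_value_Icc hu.2 (hcont'.mono huy) ⟨h.le, by linarith⟩
    have : t ≤ w := le_csSup hTbdd ⟨huy ht, hmt⟩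
    have hwu : w < u := by
      rcases lt_or_eq_of_le hu.1 with h1 | h1
      · exact h1
      · rw [← h1] at h; rw [hmw] at h; linarith
    linarith [ht.1]
  have hyw : 1/K ≤ y - w := by
    have h1 := hlip w (hIcc_sub hw_zy) hmw y hy
    have h2 : |M - m y| = m y - M := by rw [abs_of_nonpos (by linarith)]; ring
    have h3 : |w - y| = y - w := by rw [abs_of_nonpos (by linarith [hw_zy.2])]; ring
    rw [h2, h3] at h1
    have : L / K ≤ L * (y - w) := by linarith
    rw [div_le_iff₀ hK0] at *
    nlinarith
  have hsub : Set.Ico w (w + 1/K) ⊆ {x ∈ Set.Icc (0:ℝ) 1 | M ≤ m x ∧ m x < M + L / K} := by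
    intro u hu
    have hu_wy : u ∈ Set.Icc w y := ⟨hu.1, by linarith [hu.2]⟩
    have huI : u ∈ Set.Icc (0:ℝ) 1 := hIcc_sub ⟨hw_zy.1.trans hu_wy.1, hu_wy.2⟩
    refine ⟨huI, hge u hu_wy, ?_⟩
    have h1 := hlip w (hIcc_sub hw_zy) hmw u huI
    have h2 : m u - M ≤ |M - m u| := by
      rw [abs_sub_comm]; exact le_abs_self _
    have h3 : |w - u| = u - w := by rw [abs_of_nonpos (by linarith [hu_wy.1])]; ring
    rw [h3] at h1
    have h4 : L * (u - w) < L * (1/K) := by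
      apply mul_lt_mul_of_pos_left _ hL
      linarith [hu.2]
    rw [mul_one_div] at h4
    linarith
  calc ENNReal.ofReal (1/K) = volume (Set.Ico w (w + 1/K)) := by
        rw [Real.volume_Ico]; ring_nf
    _ ≤ _ := measure_mono hsub

/-- Case y < z : an interval of length 1/K lies in the target slab. -/
private lemma aux_right (m : ℝ → ℝ) (L M K : ℝ)
    (hcont : ContinuousOn m (Set.Icc 0 1)) (hL : 0 < L) (hK0 : 0 < K)
    (hlip : ∀ w ∈ Set.Icc (0:ℝ) 1, m w = M → ∀ u ∈ Set.Icc (0:ℝ) 1,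
      |M - m u| ≤ L * |w - u|)
    (z y : ℝ) (hz : z ∈ Set.Icc (0:ℝ) 1) (hy : y ∈ Set.Icc (0:ℝ) 1)
    (hzy : y < z) (hmz : m z < M) (hmy : M + L / K ≤ m y) :
    ENNReal.ofReal (1/K) ≤ volume {x ∈ Set.Icc (0:ℝ) 1 | M ≤ m x ∧ m x < M + L / K} := by
  have hLK : 0 < L / K := div_pos hL hK0
  have hIcc_sub : Set.Icc y z ⊆ Set.Icc 0 1 := Set.Icc_subset_Icc hy.1 hz.2
  have hcont' : ContinuousOn m (Set.Icc y z) := hcont.mono hIcc_sub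
  have hMmem : M ∈ Set.Icc (m z) (m y) := ⟨hmz.le, by linarith⟩
  obtain ⟨w0, hw0, hmw0⟩ := intermediate_value_Icc' hzy.le hcont' hMmem
  set T : Set ℝ := {t ∈ Set.Icc y z | m t = M} with hT
  have hTne : T.Nonempty := ⟨w0, hw0, hmw0⟩
  have hTbdd : BddBelow T := ⟨y, fun t ht => ht.1.1⟩
  have hTclosed : IsClosed T := by
    have : T = Set.Icc y z ∩ m ⁻¹' {M} := rfl
    rw [this]
    exact hcont'.preimage_isClosed_of_isClosed isClosed_Icc isClosed_singleton
  set w := sInf T with hw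
  have hwT : w ∈ T := hTclosed.csInf_mem hTne hTbdd
  have hw_yz : w ∈ Set.Icc y z := hwT.1
  have hmw : m w = M := hwT.2
  have hge : ∀ u ∈ Set.Icc y w, M ≤ m u := by
    intro u hu
    by_contra h
    push_neg at h
    have huy : Set.Icc y u ⊆ Set.Icc y z := Set.Icc_subset_Icc le_rfl (hu.2.trans hw_yz.2)
    obtain ⟨t, ht, hmt⟩ := intermediate_value_Icc' hu.1 (hcont'.mono huy) ⟨h.le, by linarith⟩
    have : w ≤ t := csInf_le hTbdd ⟨huy ht, hmt⟩
    have hwu : u < w := by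
      rcases lt_or_eq_of_le hu.2 with h1 | h1
      · exact h1
      · rw [h1] at h; rw [hmw] at h; linarith
    linarith [ht.2]
  have hyw : 1/K ≤ w - y := by
    have h1 := hlip w (hIcc_sub hw_yz) hmw y hy
    have h2 : |M - m y| = m y - M := by rw [abs_of_nonpos (by linarith)]; ring
    have h3 : |w - y| = w - y := abs_of_nonneg (by linarith [hw_yz.1])
    rw [h2, h3] at h1
    have : L / K ≤ L * (w - y) := by linarith
    rw [div_le_iff₀ hK0] at *
    nlinarith
  have hsub : Set.Ioc (w - 1/K) w ⊆ {x ∈ Set.Icc (0:ℝ) 1 | M ≤ m x ∧ m x < M + L / K} := by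
    intro u hu
    have hu_wy : u ∈ Set.Icc y w := ⟨by linarith [hu.1], hu.2⟩
    have huI : u ∈ Set.Icc (0:ℝ) 1 := hIcc_sub ⟨hu_wy.1, hu_wy.2.trans hw_yz.2⟩
    refine ⟨huI, hge u hu_wy, ?_⟩
    have h1 := hlip w (hIcc_sub hw_yz) hmw u huI
    have h2 : m u - M ≤ |M - m u| := by
      rw [abs_sub_comm]; exact le_abs_self _
    have h3 : |w - u| = w - u := abs_of_nonneg (by linarith [hu_wy.2])
    rw [h3] at h1
    have h4 : L * (w - u) < L * (1/K) := by
      apply mul_lt_mul_of_pos_left _ hL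
      linarith [hu.1]
    rw [mul_one_div] at h4
    linarith
  calc ENNReal.ofReal (1/K) = volume (Set.Ioc (w - 1/K) w) := by
        rw [Real.volume_Ioc]; ring_nf
    _ ≤ _ := measure_mono hsub

theorem stmt_5 (m : ℝ → ℝ) (p L M K : ℝ)
    (hm : ∀ x ∈ Set.Icc (0:ℝ) 1, m x ∈ Set.Icc (0:ℝ) 1)
    (hcont : ContinuousOn m (Set.Icc 0 1))
    (hp : p ∈ Set.Ioo (0:ℝ) 1) (hL : 0 < L)
    (hM : M = sInf {A : ℝ | volume {x ∈ Set.Icc (0:ℝ) 1 | m x ≥ A} < ENNReal.ofReal p})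
    (hlip : ∀ x ∈ Set.Icc (0:ℝ) 1, ∀ y ∈ Set.Icc (0:ℝ) 1,
      |m x - m y| ≤ max (|M - m x|) (L * |x - y|))
    (hbelow : 0 < volume {x ∈ Set.Icc (0:ℝ) 1 | m x < M})
    (hlevel : ∃ x ∈ Set.Icc (0:ℝ) 1, m x = M)
    (hK : 1 ≤ K) (hK' : 1 / K ≤ 1) :
    volume {x ∈ Set.Icc (0:ℝ) 1 | M ≤ m x ∧ m x < M + L / K}
      ≥ ENNReal.ofReal (min p (1 / K)) := by
  obtain ⟨hp0, hp1⟩ := hp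
  have hK0 : (0:ℝ) < K := lt_of_lt_of_le one_pos hK
  have hLK : 0 < L / K := div_pos hL hK0
  -- derived Lipschitz property at level points
  have hlip' : ∀ w ∈ Set.Icc (0:ℝ) 1, m w = M → ∀ u ∈ Set.Icc (0:ℝ) 1,
      |M - m u| ≤ L * |w - u| := by
    intro w hw hmw u hu
    have h := hlip w hw u hu
    rw [hmw] at h
    rwa [sub_self, abs_zero, max_eq_right (by positivity)] at h
  -- step 1 : for A < M, the superlevel set has measure at least p
  have step1 : ∀ A : ℝ, A < M → ENNReal.ofReal p ≤ volume {x ∈ Set.Icc (0:ℝ) 1 | m x ≥ A} := by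
    intro A hA
    by_contra h
    push_neg at h
    have hbdd : BddBelow {A : ℝ | volume {x ∈ Set.Icc (0:ℝ) 1 | m x ≥ A} < ENNReal.ofReal p} := by
      refine ⟨0, fun B hB => ?_⟩
      by_contra hB0
      push_neg at hB0
      have hfull : {x ∈ Set.Icc (0:ℝ) 1 | m x ≥ B} = Set.Icc (0:ℝ) 1 := by
        ext x
        simp only [Set.mem_setOf_eq, Set.mem_Icc]
        constructor
        · rintro ⟨hx, -⟩; exact hx
        · intro hx; exact ⟨hx, le_trans hB0.le (hm x hx).1⟩
      simp only [Set.mem_setOf_eq] at hB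
      rw [hfull] at hB
      rw [Real.volume_Icc] at hB
      simp only [sub_zero] at hB
      exact absurd hB (not_lt.mpr (ENNReal.ofReal_le_ofReal hp1.le))
    have : M ≤ A := hM ▸ csInf_le hbdd h
    linarith
  -- step 2 : the superlevel set at M has measure at least p
  set s : ℕ → Set ℝ := fun n => {x ∈ Set.Icc (0:ℝ) 1 | M - 1/(n+1) ≤ m x} with hs_def
  have hs_meas : ∀ n, NullMeasurableSet (s n) volume := fun n =>
    ((aux_closed m hcont (M - 1/(n+1))).measurableSet).nullMeasurableSet
  have hs_anti : Antitone s := by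
    intro a b hab x hx
    refine ⟨hx.1, le_trans ?_ hx.2⟩
    have : 1/((b:ℝ)+1) ≤ 1/((a:ℝ)+1) := by
      apply one_div_le_one_div_of_le (by positivity)
      exact_mod_cast Nat.succ_le_succ hab
    linarith
  have hs_fin : ∃ i, volume (s i) ≠ ⊤ := by
    refine ⟨0, ?_⟩
    have : volume (s 0) ≤ volume (Set.Icc (0:ℝ) 1) := measure_mono (fun x hx => hx.1)
    rw [Real.volume_Icc] at this
    exact ne_top_of_le_ne_top (by simp) this
  have hs_inter : ⋂ n, s n = {x ∈ Set.Icc (0:ℝ) 1 | m x ≥ M} := by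
    ext x
    simp only [Set.mem_iInter, Set.mem_setOf_eq, hs_def]
    constructor
    · intro h
      refine ⟨(h 0).1, ?_⟩
      by_contra hc
      push_neg at hc
      obtain ⟨n, hn⟩ := exists_nat_one_div_lt (show (0:ℝ) < M - m x by linarith)
      have := (h n).2
      linarith
    · intro ⟨h1, h2⟩ n
      refine ⟨h1, ?_⟩
      have : (0:ℝ) < 1/((n:ℝ)+1) := by positivity
      linarith
  have step2 : ENNReal.ofReal p ≤ volume {x ∈ Set.Icc (0:ℝ) 1 | m x ≥ M} := by
    rw [← hs_inter, hs_anti.measure_iInter hs_meas hs_fin]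
    refine le_iInf fun n => step1 _ ?_
    have : (0:ℝ) < 1/((n:ℝ)+1) := by positivity
    linarith
  rw [ge_iff_le]
  by_cases hy : ∃ y ∈ Set.Icc (0:ℝ) 1, M + L / K ≤ m y
  · -- there is a point well above the level: use an interval of length 1/K
    obtain ⟨y, hyI, hmy⟩ := hy
    obtain ⟨z, hzI, hmz⟩ : ∃ z ∈ Set.Icc (0:ℝ) 1, m z < M := by
      obtain ⟨z, hz⟩ := nonempty_of_measure_ne_zero hbelow.ne'
      exact ⟨z, hz.1, hz.2⟩
    have hne : z ≠ y := fun h => by rw [h] at hmz; linarith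
    have key : ENNReal.ofReal (1/K) ≤
        volume {x ∈ Set.Icc (0:ℝ) 1 | M ≤ m x ∧ m x < M + L / K} := by
      rcases hne.lt_or_gt with h | h
      · exact aux_left m L M K hcont hL hK0 hlip' z y hzI hyI h hmz hmy
      · exact aux_right m L M K hcont hL hK0 hlip' z y hzI hyI h hmz hmy
    exact le_trans (ENNReal.ofReal_le_ofReal (min_le_right _ _)) key
  · -- all values are below M + L/K : the superlevel set is contained in the slab
    push_neg at hy
    have hsub : {x ∈ Set.Icc (0:ℝ) 1 | m x ≥ M} ⊆
        {x ∈ Set.Icc (0:ℝ) 1 | M ≤ m x ∧ m x < M + L / K} :=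
      fun x hx => ⟨hx.1, hx.2, hy x hx.1⟩
    exact le_trans (ENNReal.ofReal_le_ofReal (min_le_left _ _))
      (le_trans step2 (measure_mono hsub))
end

section
/- Fix p ∈ (0,1), L ∈ (0, 1/2], and δ > 0 with 2δ < min(p, 1-p) and L·δ < 1/4. Set x₀ = 1-p-2δ and x₁ = 1-p+2δ, and define m₀ : [0,1] → ℝ to be the piecewise-linear function with m₀(x) = 1/2 - L(x₀-x) on [0,x₀), m₀(x) = 1/2 - L(x-x₀) on [x₀, x₀+δ), m₀(x) = 1/2 - L(1-p-x) on [x₀+δ, 1-p), m₀(x) = 1/2 + L(x-(1-p)) on [1-p, 1-p+δ), m₀(x) = 1/2 + L(x₁-x) on [1-p+δ, x₁), and m₀(x) = 1/2 + L(x-x₁) on [x₁,1]. Then for all x, y ∈ [0,1], |m₀(x) - m₀(y)| ≤ max(|1/2 - m₀(x)|, L|x-y|). -/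
theorem stmt_6 (p L δ : ℝ) (m₀ : ℝ → ℝ)
    (hp : p ∈ Set.Ioo (0:ℝ) 1) (hL : L ∈ Set.Ioc (0:ℝ) (1/2))
    (hδ : 0 < δ) (hδ' : 2 * δ < min p (1 - p)) (hLδ : L * δ < 1/4)
    (x₀ x₁ : ℝ) (hx₀ : x₀ = 1 - p - 2*δ) (hx₁ : x₁ = 1 - p + 2*δ)
    (h1 : ∀ x ∈ Set.Ico (0:ℝ) x₀, m₀ x = 1/2 - L*(x₀ - x))
    (h2 : ∀ x ∈ Set.Ico x₀ (x₀ + δ), m₀ x = 1/2 - L*(x - x₀))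
    (h3 : ∀ x ∈ Set.Ico (x₀ + δ) (1 - p), m₀ x = 1/2 - L*(1 - p - x))
    (h4 : ∀ x ∈ Set.Ico (1 - p) (1 - p + δ), m₀ x = 1/2 + L*(x - (1 - p)))
    (h5 : ∀ x ∈ Set.Ico (1 - p + δ) x₁, m₀ x = 1/2 + L*(x₁ - x))
    (h6 : ∀ x ∈ Set.Icc x₁ 1, m₀ x = 1/2 + L*(x - x₁)) :
    ∀ x ∈ Set.Icc (0:ℝ) 1, ∀ y ∈ Set.Icc (0:ℝ) 1,
      |m₀ x - m₀ y| ≤ max (|1/2 - m₀ x|) (L * |x - y|) := by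
  obtain ⟨hp0, hp1⟩ := hp
  obtain ⟨hL0, hL12⟩ := hL
  have hδp : 2*δ < p := lt_of_lt_of_le hδ' (min_le_left _ _)
  have hδq : 2*δ < 1 - p := lt_of_lt_of_le hδ' (min_le_right _ _)
  set B1 : ℝ → ℝ := fun z => max (-|z - x₀|) (z - (1-p)) with hB1def
  set B2 : ℝ → ℝ := fun z => max (min (z - (1-p)) (x₁ - z)) (z - x₁) with hB2def
  have hB1lip : ∀ a b : ℝ, |B1 a - B1 b| ≤ |a - b| := by
    intro a b
    refine (abs_max_sub_max_le_max _ _ _ _).trans (max_le ?_ ?_)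
    · have h := abs_abs_sub_abs_le_abs_sub (a - x₀) (b - x₀)
      have e1 : (-|a - x₀| - -|b - x₀|) = -(|a - x₀| - |b - x₀|) := by ring
      have e2 : (a - x₀) - (b - x₀) = a - b := by ring
      rw [e1, abs_neg]
      rw [e2] at h
      exact h
    · have : (a - (1-p)) - (b - (1-p)) = a - b := by ring
      rw [this]
  have hB2lip : ∀ a b : ℝ, |B2 a - B2 b| ≤ |a - b| := by
    intro a b
    refine (abs_max_sub_max_le_max _ _ _ _).trans (max_le ?_ ?_)
    · refine (abs_min_sub_min_le_max _ _ _ _).trans (max_le ?_ ?_)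
      · have : (a - (1-p)) - (b - (1-p)) = a - b := by ring
        rw [this]
      · have : (x₁ - a) - (x₁ - b) = -(a - b) := by ring
        rw [this, abs_neg]
    · have : (a - x₁) - (b - x₁) = a - b := by ring
      rw [this]
  have hB1mid : B1 (1-p) = 0 := by
    have ha : |1 - p - x₀| = 2*δ := by
      rw [hx₀]; rw [abs_of_nonneg] <;> [ring; linarith]
    simp only [hB1def, ha]
    rw [max_eq_right] <;> [ring; linarith]
  have hB2mid : B2 (1-p) = 0 := by
    simp only [hB2def]
    rw [min_eq_left (by rw [hx₁]; linarith), max_eq_left (by rw [hx₁]; linarith)]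
    ring
  -- the representation
  have hrep : ∀ z ∈ Set.Icc (0:ℝ) 1,
      m₀ z = 1/2 + L * (if z < 1 - p then B1 z else B2 z) := by
    intro z hz
    obtain ⟨hz0, hz1⟩ := hz
    rcases lt_or_ge z x₀ with c1 | c1
    · rw [h1 z ⟨hz0, c1⟩, if_pos (by rw [hx₀] at c1; linarith)]
      simp only [hB1def]
      rw [abs_of_nonpos (by linarith), max_eq_left (by rw [hx₀]; linarith)]
      ring
    · rcases lt_or_ge z (x₀ + δ) with c2 | c2
      · rw [h2 z ⟨c1, c2⟩, if_pos (by rw [hx₀] at c2; linarith)]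
        simp only [hB1def]
        rw [abs_of_nonneg (by linarith), max_eq_left (by rw [hx₀] at c2 ⊢; linarith)]
        ring
      · rcases lt_or_ge z (1 - p) with c3 | c3
        · rw [h3 z ⟨c2, c3⟩, if_pos c3]
          simp only [hB1def]
          rw [abs_of_nonneg (by rw [hx₀] at c2; linarith),
            max_eq_right (by rw [hx₀] at c2; linarith)]
          ring
        · rw [if_neg (not_lt.mpr c3)]
          rcases lt_or_ge z (1 - p + δ) with c4 | c4
          · rw [h4 z ⟨c3, c4⟩]
            simp only [hB2def]
            rw [min_eq_left (by rw [hx₁]; linarith),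
              max_eq_left (by rw [hx₁]; linarith)]
          · rcases lt_or_ge z x₁ with c5 | c5
            · rw [h5 z ⟨c4, c5⟩]
              simp only [hB2def]
              rw [min_eq_right (by rw [hx₁] at c5 ⊢; linarith),
                max_eq_left (by linarith)]
            · rw [h6 z ⟨c5, hz1⟩]
              simp only [hB2def]
              rw [min_eq_right (by rw [hx₁] at c5 ⊢; linarith),
                max_eq_right (by linarith)]
  -- Lipschitz bound on the glued function
  have hGlip : ∀ a ∈ Set.Icc (0:ℝ) 1, ∀ b ∈ Set.Icc (0:ℝ) 1,
      |(if a < 1 - p then B1 a else B2 a) - (if b < 1 - p then B1 b else B2 b)| ≤ |a - b| := by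
    intro a _ b _
    rcases lt_or_ge a (1-p) with ca | ca <;> rcases lt_or_ge b (1-p) with cb | cb
    · rw [if_pos ca, if_pos cb]; exact hB1lip a b
    · rw [if_pos ca, if_neg (not_lt.mpr cb)]
      calc |B1 a - B2 b| = |(B1 a - B1 (1-p)) + (B2 (1-p) - B2 b)| := by
              rw [hB1mid, hB2mid]; ring_nf
        _ ≤ |B1 a - B1 (1-p)| + |B2 (1-p) - B2 b| := abs_add_le _ _
        _ ≤ |a - (1-p)| + |(1-p) - b| := add_le_add (hB1lip _ _) (hB2lip _ _)
        _ ≤ |a - b| := by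
              rw [abs_of_nonpos (by linarith), abs_of_nonpos (by linarith),
                abs_of_nonpos (by linarith)]
              linarith
    · rw [if_neg (not_lt.mpr ca), if_pos cb]
      calc |B2 a - B1 b| = |(B2 a - B2 (1-p)) + (B1 (1-p) - B1 b)| := by
              rw [hB1mid, hB2mid]; ring_nf
        _ ≤ |B2 a - B2 (1-p)| + |B1 (1-p) - B1 b| := abs_add_le _ _
        _ ≤ |a - (1-p)| + |(1-p) - b| := add_le_add (hB2lip _ _) (hB1lip _ _)
        _ ≤ |a - b| := by
              rw [abs_of_nonneg (by linarith), abs_of_nonneg (by linarith),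
                abs_of_nonneg (by linarith)]
              linarith
    · rw [if_neg (not_lt.mpr ca), if_neg (not_lt.mpr cb)]; exact hB2lip a b
  intro x hx y hy
  have hx' := hrep x hx
  have hy' := hrep y hy
  refine le_trans ?_ (le_max_right _ _)
  rw [hx', hy']
  have e : (1/2 + L * (if x < 1 - p then B1 x else B2 x))
      - (1/2 + L * (if y < 1 - p then B1 y else B2 y))
      = L * ((if x < 1 - p then B1 x else B2 x) - (if y < 1 - p then B1 y else B2 y)) := by
    ring
  rw [e, abs_mul, abs_of_pos hL0]
  exact mul_le_mul_of_nonneg_left (hGlip x hx y hy) (le_of_lt hL0)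
end

section
/- Fix p ∈ (0,1), L ∈ (0, 1/2], and δ > 0 with 2δ < min(p, 1-p) and L·δ < 1/4. Set x₀ = 1-p-2δ, x₁ = 1-p+2δ, and let m₀ be the piecewise linear function defined by: m₀(x) = 1/2 - L(x₀-x) on [0,x₀), 1/2 - L(x-x₀) on [x₀, x₀+δ), 1/2 - L(1-p-x) on [x₀+δ, 1-p), 1/2 + L(x-(1-p)) on [1-p, 1-p+δ), 1/2 + L(x₁-x) on [1-p+δ, x₁), and 1/2 + L(x-x₁) on [x₁,1]. Then for every ε > 0, the Lebesgue measure of {x ∈ [0,1] : |m₀(x) - 1/2| ≤ ε} is at most 6ε/L. -/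
open MeasureTheory

theorem stmt_7 (p L δ : ℝ) (m₀ : ℝ → ℝ)
    (hp : p ∈ Set.Ioo (0:ℝ) 1) (hL : L ∈ Set.Ioc (0:ℝ) (1/2))
    (hδ : 0 < δ) (hδ' : 2 * δ < min p (1 - p)) (hLδ : L * δ < 1/4)
    (x₀ x₁ : ℝ) (hx₀ : x₀ = 1 - p - 2*δ) (hx₁ : x₁ = 1 - p + 2*δ)
    (h1 : ∀ x ∈ Set.Ico (0:ℝ) x₀, m₀ x = 1/2 - L*(x₀ - x))
    (h2 : ∀ x ∈ Set.Ico x₀ (x₀ + δ), m₀ x = 1/2 - L*(x - x₀))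
    (h3 : ∀ x ∈ Set.Ico (x₀ + δ) (1 - p), m₀ x = 1/2 - L*(1 - p - x))
    (h4 : ∀ x ∈ Set.Ico (1 - p) (1 - p + δ), m₀ x = 1/2 + L*(x - (1 - p)))
    (h5 : ∀ x ∈ Set.Ico (1 - p + δ) x₁, m₀ x = 1/2 + L*(x₁ - x))
    (h6 : ∀ x ∈ Set.Icc x₁ 1, m₀ x = 1/2 + L*(x - x₁)) :
    ∀ ε > (0:ℝ),
      volume {x ∈ Set.Icc (0:ℝ) 1 | |m₀ x - 1/2| ≤ ε} ≤ ENNReal.ofReal (6 * ε / L) := by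
  intro ε hε
  obtain ⟨hL0, hL2⟩ := hL
  have hεL : (0:ℝ) ≤ ε / L := le_of_lt (div_pos hε hL0)
  have hsub : {x ∈ Set.Icc (0:ℝ) 1 | |m₀ x - 1/2| ≤ ε} ⊆
      Set.Icc (x₀ - ε/L) (x₀ + ε/L) ∪ Set.Icc ((1-p) - ε/L) ((1-p) + ε/L)
        ∪ Set.Icc (x₁ - ε/L) (x₁ + ε/L) := by
    rintro x ⟨⟨hx0, hx1⟩, hxε⟩
    have key : ∀ c : ℝ, |x - c| ≤ ε/L → x ∈ Set.Icc (c - ε/L) (c + ε/L) := by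
      intro c hc
      have := abs_le.mp hc
      exact ⟨by linarith [this.1], by linarith [this.2]⟩
    rcases lt_or_ge x x₀ with hc | hc
    · left; left
      rw [h1 x ⟨hx0, hc⟩] at hxε
      apply key
      rw [abs_le] at hxε ⊢
      constructor
      · rw [neg_le, ← neg_sub, le_div_iff₀ hL0]; nlinarith [hxε.1]
      · linarith
    rcases lt_or_ge x (x₀ + δ) with hc2 | hc2
    · left; left
      rw [h2 x ⟨hc, hc2⟩] at hxε
      apply key
      rw [abs_le] at hxε ⊢
      constructor
      · rw [neg_le, ← neg_sub, le_div_iff₀ hL0]; nlinarith [hxε.1]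
      · rw [le_div_iff₀ hL0]; nlinarith [hxε.1]
    rcases lt_or_ge x (1 - p) with hc3 | hc3
    · left; right
      rw [h3 x ⟨hc2, hc3⟩] at hxε
      apply key
      rw [abs_le] at hxε ⊢
      constructor
      · rw [neg_le, ← neg_sub, le_div_iff₀ hL0]; nlinarith [hxε.1]
      · rw [le_div_iff₀ hL0]; nlinarith [hxε.1]
    rcases lt_or_ge x (1 - p + δ) with hc4 | hc4
    · left; right
      rw [h4 x ⟨hc3, hc4⟩] at hxε
      apply key
      rw [abs_le] at hxε ⊢
      constructor
      · rw [neg_le, ← neg_sub, le_div_iff₀ hL0]; nlinarith [hxε.2]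
      · rw [le_div_iff₀ hL0]; nlinarith [hxε.2]
    rcases lt_or_ge x x₁ with hc5 | hc5
    · right
      rw [h5 x ⟨hc4, hc5⟩] at hxε
      apply key
      rw [abs_le] at hxε ⊢
      constructor
      · rw [neg_le, ← neg_sub, le_div_iff₀ hL0]; nlinarith [hxε.2]
      · rw [le_div_iff₀ hL0]; nlinarith [hxε.2]
    · right
      rw [h6 x ⟨hc5, hx1⟩] at hxε
      apply key
      rw [abs_le] at hxε ⊢
      constructor
      · rw [neg_le, ← neg_sub, le_div_iff₀ hL0]; nlinarith [hxε.2]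
      · rw [le_div_iff₀ hL0]; nlinarith [hxε.2]
  calc volume {x ∈ Set.Icc (0:ℝ) 1 | |m₀ x - 1/2| ≤ ε}
      ≤ volume (Set.Icc (x₀ - ε/L) (x₀ + ε/L) ∪ Set.Icc ((1-p) - ε/L) ((1-p) + ε/L)
          ∪ Set.Icc (x₁ - ε/L) (x₁ + ε/L)) := measure_mono hsub
    _ ≤ volume (Set.Icc (x₀ - ε/L) (x₀ + ε/L)) + volume (Set.Icc ((1-p) - ε/L) ((1-p) + ε/L))
          + volume (Set.Icc (x₁ - ε/L) (x₁ + ε/L)) :=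
        le_trans (measure_union_le _ _) (by gcongr; exact measure_union_le _ _)
    _ = ENNReal.ofReal (2*(ε/L)) + ENNReal.ofReal (2*(ε/L)) + ENNReal.ofReal (2*(ε/L)) := by
        rw [Real.volume_Icc, Real.volume_Icc, Real.volume_Icc]; ring_nf
    _ = ENNReal.ofReal (6 * ε / L) := by
        rw [← ENNReal.ofReal_add (by positivity) (by positivity),
            ← ENNReal.ofReal_add (by positivity) (by positivity)]
        congr 1; field_simp; ring
end

section
/- Let m : [0,1]^d → [0,1] and M ∈ ℝ, L > 0, K ≥ 1 an integer, d ≥ 1. Suppose m satisfies |m(x) - m(y)| ≤ max(|M - m(x)|, L·‖x - y‖₂) for all x, y ∈ [0,1]^d. Let B be a closed axis-aligned cube of side 1/K contained in [0,1]^d, and suppose a ∈ B with m(a) = M + α·L/K for some α > 0. Then for every a' ∈ B, m(a') ≤ M + (α + max(α, √d))·L/K and m(a') ≥ M + (α - max(α, 2√d)/2)·L/K. -/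
theorem stmt_10 (d K : ℕ) (hd : 1 ≤ d) (hK : 1 ≤ K)
    (m : EuclideanSpace ℝ (Fin d) → ℝ) (M L α : ℝ) (hL : 0 < L)
    (hm : ∀ x, (∀ i, x i ∈ Set.Icc (0:ℝ) 1) → m x ∈ Set.Icc (0:ℝ) 1)
    (hlip : ∀ x y : EuclideanSpace ℝ (Fin d),
      (∀ i, x i ∈ Set.Icc (0:ℝ) 1) → (∀ i, y i ∈ Set.Icc (0:ℝ) 1) →
      |m x - m y| ≤ max (|M - m x|) (L * ‖x - y‖))
    (c : EuclideanSpace ℝ (Fin d))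
    (B : Set (EuclideanSpace ℝ (Fin d)))
    (hB : B = {x | ∀ i, x i ∈ Set.Icc (c i) (c i + 1 / K)})
    (hBsub : ∀ x ∈ B, ∀ i, x i ∈ Set.Icc (0:ℝ) 1)
    (a : EuclideanSpace ℝ (Fin d)) (ha : a ∈ B)
    (hα : 0 < α) (hma : m a = M + α * L / K) :
    ∀ a' ∈ B, m a' ≤ M + (α + max α (Real.sqrt d)) * L / K ∧
      m a' ≥ M + (α - max α (2 * Real.sqrt d) / 2) * L / K := by
  intro a' ha'
  have hKpos : (0:ℝ) < K := by exact_mod_cast hK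
  have haB := hBsub a ha
  have ha'B := hBsub a' ha'
  subst hB
  have hsd : 0 ≤ Real.sqrt d := Real.sqrt_nonneg _
  have hcoord : ∀ i, |a i - a' i| ≤ 1 / K := by
    intro i
    have h1 := ha i
    have h2 := ha' i
    rw [abs_le]
    constructor <;> [linarith [h1.1, h2.2]; linarith [h1.2, h2.1]]
  have hdist : ‖a - a'‖ ≤ Real.sqrt d / K := by
    rw [EuclideanSpace.norm_eq]
    have hb : ∀ i : Fin d, ‖(a - a') i‖ ^ 2 ≤ (1 / (K:ℝ)) ^ 2 := by
      intro i
      have he : ‖(a - a') i‖ = |a i - a' i| := by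
        simp [PiLp.sub_apply, Real.norm_eq_abs]
      rw [he]
      exact pow_le_pow_left₀ (abs_nonneg _) (hcoord i) 2
    calc Real.sqrt (∑ i, ‖(a - a') i‖ ^ 2)
        ≤ Real.sqrt (∑ _i : Fin d, (1 / (K:ℝ)) ^ 2) :=
          Real.sqrt_le_sqrt (Finset.sum_le_sum fun i _ => hb i)
      _ = Real.sqrt ((d : ℝ) * (1 / K) ^ 2) := by
          rw [Finset.sum_const, Finset.card_fin, nsmul_eq_mul]
      _ = Real.sqrt d * (1 / K) := by
          rw [Real.sqrt_mul (Nat.cast_nonneg d), Real.sqrt_sq (by positivity)]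
      _ = Real.sqrt d / K := by ring
  have hMa : |M - m a| = α * L / K := by
    have h0 : M - m a = -(α * L / K) := by rw [hma]; ring
    rw [h0, abs_neg, abs_of_pos (by positivity)]
  have hLd : L * ‖a - a'‖ ≤ Real.sqrt d * L / K := by
    have := mul_le_mul_of_nonneg_left hdist hL.le
    calc L * ‖a - a'‖ ≤ L * (Real.sqrt d / K) := this
      _ = Real.sqrt d * L / K := by ring
  have hLK : (0:ℝ) < L / K := div_pos hL hKpos
  -- upper bound
  have h1 := hlip a a' haB ha'B
  have hub : |m a - m a'| ≤ max (α * L / K) (Real.sqrt d * L / K) :=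
    h1.trans (max_le_max hMa.le hLd)
  have hmax : max (α * L / K) (Real.sqrt d * L / K) = max α (Real.sqrt d) * L / K := by
    rcases le_total α (Real.sqrt d) with h | h
    · rw [max_eq_right h, max_eq_right]
      gcongr
    · rw [max_eq_left h, max_eq_left]
      gcongr
  rw [hmax] at hub
  have hub2 := abs_le.mp hub
  constructor
  · have hexp : (α + max α (Real.sqrt d)) * L / K
        = α * L / K + max α (Real.sqrt d) * L / K := by ring
    rw [hexp]
    linarith [hub2.1, hma.symm.le, hma.le]
  -- lower bound
  · have h2 := hlip a' a ha'B haB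
    have hrev : ‖a' - a‖ = ‖a - a'‖ := norm_sub_rev _ _
    have hmaxge : α ≤ max α (2 * Real.sqrt d) := le_max_left _ _
    have hmaxge2 : 2 * Real.sqrt d ≤ max α (2 * Real.sqrt d) := le_max_right _ _
    rcases le_total (L * ‖a' - a‖) (|M - m a'|) with hc | hc
    · -- max is |M - m a'|
      have h2' : |m a' - m a| ≤ |M - m a'| := h2.trans (max_le le_rfl hc)
      have hsq : (m a' - m a) ^ 2 ≤ (M - m a') ^ 2 := by
        have := pow_le_pow_left₀ (abs_nonneg _) h2' 2
        rwa [sq_abs, sq_abs] at this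
      have hspos : 0 < α * L / K := by positivity
      have ht2 : M + (α * L / K) / 2 ≤ m a' := by nlinarith [hsq, hma, hspos]
      have hkey : (α - max α (2 * Real.sqrt d) / 2) * (L / K) ≤ (α / 2) * (L / K) := by
        have h' : α - max α (2 * Real.sqrt d) / 2 ≤ α / 2 := by linarith
        exact mul_le_mul_of_nonneg_right h' hLK.le
      have heq1 : (α - max α (2 * Real.sqrt d) / 2) * L / K
          = (α - max α (2 * Real.sqrt d) / 2) * (L / K) := by ring
      have heq2 : (α / 2) * (L / K) = (α * L / K) / 2 := by ring
      rw [ge_iff_le, heq1]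
      linarith
    · -- max is L‖a'-a‖
      have h2' : |m a' - m a| ≤ Real.sqrt d * L / K := by
        refine (h2.trans (max_le ?_ ?_)) <;> rw [hrev] at * <;> [exact hc.trans hLd; exact hLd]
      have hlow := (abs_le.mp h2').1
      have hkey : (α - max α (2 * Real.sqrt d) / 2) * (L / K)
          ≤ (α - Real.sqrt d) * (L / K) := by
        have h' : α - max α (2 * Real.sqrt d) / 2 ≤ α - Real.sqrt d := by linarith
        exact mul_le_mul_of_nonneg_right h' hLK.le
      have heq1 : (α - max α (2 * Real.sqrt d) / 2) * L / K
          = (α - max α (2 * Real.sqrt d) / 2) * (L / K) := by ring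
      have heq2 : (α - Real.sqrt d) * (L / K) = α * L / K - Real.sqrt d * L / K := by ring
      rw [ge_iff_le, heq1]
      linarith [hma.le, hma.symm.le]
end

section
/- Let N be a positive integer, p ∈ (0,1) with T = pN an integer, and let a₁, ..., a_N be i.i.d. random variables with values in [0,1]. Let m : [0,1] → [0,1] be measurable, M ∈ ℝ with P(m(a₁) ≥ M) = p, and let M̂ denote the T-th largest value among m(a₁), ..., m(a_N). Then for every t > 0, P(M̂ ≥ M + t) ≤ exp(-2N·P(m(a₁) ∈ [M, M+t))²). -/
/-!
On the event `M̂ ≥ M + t`, at least `T` of the indicators of `m (aᵢ) ≥ M + t` equal one. These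
indicators are independent Bernoulli variables of mean `p - q`, where
`q = P(m (a₁) ∈ [M, M + t))`, so their sum exceeds its mean `N (p - q)` by at least
`T - N (p - q) = N q`; by Hoeffding's inequality this has probability at most `exp (-2 N q²)`.
-/

open MeasureTheory ProbabilityTheory Finset Real

theorem measureReal_card_ge_le_exp {Ω ι β : Type*} [MeasurableSpace Ω] {μ : Measure Ω}
    [IsProbabilityMeasure μ] [Fintype ι] [MeasurableSpace β]
    {X : ι → Ω → β} (hX : ∀ i, Measurable (X i)) (hindep : iIndepFun X μ)
    {S : Set β} (hS : MeasurableSet S) [DecidablePred (· ∈ S)] {k : ℝ}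
    (hk : ∑ i, μ.real (X i ⁻¹' S) ≤ k) :
    μ.real {ω | k ≤ #{i | X i ω ∈ S}}
      ≤ exp (-2 * (k - ∑ i, μ.real (X i ⁻¹' S)) ^ 2 / Fintype.card ι) := by
  set Y : ι → Ω → ℝ := fun i ↦ S.indicator 1 ∘ X i
  have hY : ∀ i, Measurable (Y i) := fun i ↦ (measurable_one.indicator hS).comp (hX i)
  have hmean : ∀ i, μ[Y i] = μ.real (X i ⁻¹' S) := fun i ↦
    integral_indicator_one (hX i hS)
  have hY01 : ∀ i ω, Y i ω ∈ Set.Icc (0 : ℝ) 1 := fun i ω ↦ by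
    by_cases h : X i ω ∈ S <;> simp [Y, h]
  have hsubG : ∀ i ∈ (univ : Finset ι),
      HasSubgaussianMGF (fun ω ↦ Y i ω - μ[Y i]) (1 / 4) μ := fun i _ ↦ by
    have h := hasSubgaussianMGF_of_mem_Icc (hY i).aemeasurable (ae_of_all μ (hY01 i))
    norm_num at h
    exact h
  have hindepY : iIndepFun (fun i ω ↦ Y i ω - μ[Y i]) μ :=
    hindep.comp (fun i x ↦ S.indicator (1 : β → ℝ) x - ∫ ω, Y i ω ∂μ)
      (fun i ↦ (measurable_one.indicator hS).sub_const _)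
  have hcount : ∀ ω, (#{i | X i ω ∈ S} : ℝ) - ∑ i, μ.real (X i ⁻¹' S)
      = ∑ i, (Y i ω - μ[Y i]) := by
    intro ω
    simp only [sum_sub_distrib, hmean, natCast_card_filter]
    simp [Y, Set.indicator_apply]
  have h := HasSubgaussianMGF.measure_sum_ge_le_of_iIndepFun hindepY hsubG (sub_nonneg.mpr hk)
  simp_rw [← hcount, sub_le_sub_iff_right] at h
  convert h using 2
  push_cast [sum_const, card_univ, nsmul_eq_mul]
  ring

theorem measureReal_preimage_Ici_eq_add {Ω : Type*} [MeasurableSpace Ω] (μ : Measure Ω)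
    [IsFiniteMeasure μ] {f : Ω → ℝ} (hf : Measurable f) {a b : ℝ} (hab : a ≤ b) :
    μ.real (f ⁻¹' Set.Ici a) = μ.real (f ⁻¹' Set.Ico a b) + μ.real (f ⁻¹' Set.Ici b) := by
  rw [← measureReal_union
      (((Set.Iio_disjoint_Ici le_rfl).mono_left Set.Ico_subset_Iio_self).preimage f)
      (hf measurableSet_Ici),
    ← Set.preimage_union, Set.Ico_union_Ici_eq_Ici hab]

theorem stmt_13_general (N T : ℕ) (hN : 0 < N) (p : ℝ) (hp : p ∈ Set.Ioo (0:ℝ) 1)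
    (hT : (T : ℝ) = p * N)
    {Ω : Type*} [MeasurableSpace Ω] (μ : Measure Ω) [IsProbabilityMeasure μ]
    (a : Fin N → Ω → ℝ) (ν : Measure ℝ)
    (hmeas : ∀ i, Measurable (a i))
    (hindep : iIndepFun a μ)
    (hid : ∀ i, Measure.map (a i) μ = ν)
    (m : ℝ → ℝ) (hmmeas : Measurable m) (M : ℝ)
    (hmp : ∀ i, μ {ω | m (a i ω) ≥ M} = ENNReal.ofReal p)
    (Mhat : Ω → ℝ)
    (hMhat : ∀ ω, T ≤ (Finset.univ.filter (fun i => Mhat ω ≤ m (a i ω))).card ∧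
      (Finset.univ.filter (fun i => Mhat ω < m (a i ω))).card < T ∧
      ∃ i, m (a i ω) = Mhat ω) :
    ∀ t > (0:ℝ),
      μ {ω | Mhat ω ≥ M + t}
        ≤ ENNReal.ofReal (Real.exp
            (-2 * N * ((μ {ω | m (a ⟨0, hN⟩ ω) ∈ Set.Ico M (M + t)}).toReal) ^ 2)) := by
  intro t ht
  classical
  set q := (μ {ω | m (a ⟨0, hN⟩ ω) ∈ Set.Ico M (M + t)}).toReal
  set S := m ⁻¹' Set.Ici (M + t)
  have hSmeas : MeasurableSet S := hmmeas measurableSet_Ici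
  have hlaw : ∀ i {s}, MeasurableSet s → μ.real (a i ⁻¹' s) = ν.real s := fun i s hs ↦
    hid i ▸ (map_measureReal_apply (hmeas i) hs).symm
  have : IsProbabilityMeasure ν :=
    hid ⟨0, hN⟩ ▸ Measure.isProbabilityMeasure_map (hmeas _).aemeasurable
  have hνM : ν.real (m ⁻¹' Set.Ici M) = p := by
    rw [← hlaw ⟨0, hN⟩ (hmmeas measurableSet_Ici), measureReal_def]
    exact (congrArg ENNReal.toReal (hmp _)).trans (ENNReal.toReal_ofReal hp.1.le)
  have hνq : ν.real (m ⁻¹' Set.Ico M (M + t)) = q :=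
    (hlaw ⟨0, hN⟩ (hmmeas measurableSet_Ico)).symm
  have hνS : ν.real S = p - q := by
    linarith [measureReal_preimage_Ici_eq_add ν hmmeas (le_add_of_nonneg_right (a := M) ht.le)]
  have hmean : ∑ i, μ.real (a i ⁻¹' S) = T - N * q := by
    simp only [hlaw _ hSmeas, hνS, sum_const, card_univ, Fintype.card_fin, nsmul_eq_mul, hT]
    ring
  have hsub : {ω | Mhat ω ≥ M + t} ⊆ {ω | (T : ℝ) ≤ #{i | a i ω ∈ S}} := fun ω hω ↦ by
    have := (hMhat ω).1.trans <| card_le_card <| monotone_filter_right _ fun _ _ h ↦ le_trans hω h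
    exact_mod_cast this
  have hq : 0 ≤ q := ENNReal.toReal_nonneg
  have hhoeff := measureReal_card_ge_le_exp hmeas hindep hSmeas (k := T)
    (by rw [hmean]; nlinarith)
  have hN' : (N : ℝ) ≠ 0 := by positivity
  calc μ {ω | Mhat ω ≥ M + t} ≤ μ {ω | (T : ℝ) ≤ #{i | a i ω ∈ S}} := measure_mono hsub
    _ ≤ ENNReal.ofReal (exp (-2 * N * q ^ 2)) := by
      rw [← ofReal_measureReal (measure_ne_top _ _)]
      refine ENNReal.ofReal_le_ofReal (hhoeff.trans_eq ?_)
      rw [hmean, Fintype.card_fin]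
      congr 1
      field_simp
      ring

theorem stmt_13 (N T : ℕ) (hN : 0 < N) (p : ℝ) (hp : p ∈ Set.Ioo (0:ℝ) 1)
    (hT : (T : ℝ) = p * N) (hT1 : 1 ≤ T)
    {Ω : Type*} [MeasurableSpace Ω] (μ : Measure Ω) [IsProbabilityMeasure μ]
    (a : Fin N → Ω → ℝ) (ν : Measure ℝ)
    (hmeas : ∀ i, Measurable (a i))
    (hindep : iIndepFun a μ)
    (hid : ∀ i, Measure.map (a i) μ = ν)
    (hrange : ∀ i ω, a i ω ∈ Set.Icc (0:ℝ) 1)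
    (m : ℝ → ℝ) (hmmeas : Measurable m) (M : ℝ)
    (hmp : ∀ i, μ {ω | m (a i ω) ≥ M} = ENNReal.ofReal p)
    (Mhat : Ω → ℝ)
    (hMhat : ∀ ω, T ≤ (Finset.univ.filter (fun i => Mhat ω ≤ m (a i ω))).card ∧
      (Finset.univ.filter (fun i => Mhat ω < m (a i ω))).card < T ∧
      ∃ i, m (a i ω) = Mhat ω) :
    ∀ t > (0:ℝ),
      μ {ω | Mhat ω ≥ M + t}
        ≤ ENNReal.ofReal (Real.exp
            (-2 * N * ((μ {ω | m (a ⟨0, hN⟩ ω) ∈ Set.Ico M (M + t)}).toReal) ^ 2)) :=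
  stmt_13_general N T hN p hp hT μ a ν hmeas hindep hid m hmmeas M hmp Mhat hMhat
end
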